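/- arXiv:2510.22031 — 5 statements merged into one kernel-verified Lean document; each statement's English description precedes it below -/
import Mathlib

section
/- Let A : Fin d → Fin d → Bool be a DAG and let x, y be distinct nodes. Then x and y are d-connected given the empty conditioning set in A if and only if there exists a node a ∈ Fin d with a ⤳ x and a ⤳ y (i.e., x and y have a common ancestor, possibly equal to x or y). (Theorem 3.2, 0th-order case.) -/
/-- A directed path from `x` to `y` of length `k` in the directed graph `A`. -/
def HasPath {d : ℕ} (A : Fin d → Fin d → Bool) (x y : Fin d) (k : ℕ) : Prop :=
  ∃ v : ℕ → Fin d, v 0 = x ∧ v k = y ∧ ∀ i < k, A (v i) (v (i + 1)) = true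

/-- `y` is reachable from `x`: there is a directed path of some length `k ≥ 0`. -/
def Reachable {d : ℕ} (A : Fin d → Fin d → Bool) (x y : Fin d) : Prop :=
  ∃ k, HasPath A x y k

/-- `A` is a DAG: no directed path of positive length from a node to itself. -/
def IsDAG {d : ℕ} (A : Fin d → Fin d → Bool) : Prop :=
  ∀ (x : Fin d) (k : ℕ), 0 < k → ¬ HasPath A x x k

/-- A path between `x` and `y`: a sequence of pairwise distinct nodes
`p 0 = x, …, p m = y` with `m ≥ 1` such that consecutive nodes are joined by an
edge in one direction or the other. -/
structure IsPath {d : ℕ} (A : Fin d → Fin d → Bool) (x y : Fin d)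
    (p : ℕ → Fin d) (m : ℕ) : Prop where
  one_le : 1 ≤ m
  first : p 0 = x
  last : p m = y
  nodup : ∀ i ≤ m, ∀ j ≤ m, p i = p j → i = j
  step : ∀ i < m, A (p i) (p (i + 1)) = true ∨ A (p (i + 1)) (p i) = true

/-- The internal node `p i` is a collider on the path `p`. -/
def IsCollider {d : ℕ} (A : Fin d → Fin d → Bool) (p : ℕ → Fin d) (i : ℕ) : Prop :=
  A (p (i - 1)) (p i) = true ∧ A (p (i + 1)) (p i) = true

/-- The path `p` (of length `m`) between `x` and `y` is d-connecting given the set `Z`: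
every internal non-collider node lies outside `Z`, and from every collider some
member of `Z` is reachable. -/
def IsDConnectingPath {d : ℕ} (A : Fin d → Fin d → Bool) (x y : Fin d)
    (Z : Set (Fin d)) (p : ℕ → Fin d) (m : ℕ) : Prop :=
  IsPath A x y p m ∧
    (∀ i, 0 < i → i < m → ¬ IsCollider A p i → p i ∉ Z) ∧
    (∀ i, 0 < i → i < m → IsCollider A p i → ∃ w ∈ Z, Reachable A (p i) w)

/-- `x` and `y` are d-connected given `Z` in `A`. -/
def DConnected {d : ℕ} (A : Fin d → Fin d → Bool) (x y : Fin d) (Z : Set (Fin d)) : Prop :=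
  ∃ p m, IsDConnectingPath A x y Z p m


/-! A collider-free path `x — … — y` has no node with two incoming path edges, so it
is a backward directed run from `x` to some node `a` followed by a forward run from `a`
to `y`; thus `a` is a common ancestor. Conversely, join a directed path from a common
ancestor to `x` (reversed) with one to `y`, choosing the pair of total length as small as
possible. Acyclicity forbids colliders on the joined walk (each would close a 2-cycle) and
repeated nodes within one half; a node shared by the two halves would be a common
ancestor with a shorter pair of paths. -/

section

variable {d : ℕ} {A : Fin d → Fin d → Bool}

theorem hasPath_of_edges {v : ℕ → Fin d} {s t : ℕ} (hst : s ≤ t)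
    (hv : ∀ i, s ≤ i → i < t → A (v i) (v (i + 1)) = true) :
    HasPath A (v s) (v t) (t - s) := by
  refine ⟨fun u => v (s + u), rfl, by simp only [Nat.add_sub_cancel' hst], ?_⟩
  intro i hi
  exact hv (s + i) (by omega) (by omega)

theorem hasPath_of_reverse_edges {v : ℕ → Fin d} {s t : ℕ} (hst : s ≤ t)
    (hv : ∀ i, s ≤ i → i < t → A (v (i + 1)) (v i) = true) :
    HasPath A (v t) (v s) (t - s) := by
  refine ⟨fun u => v (t - u), by simp, by simp only [Nat.sub_sub_self hst], ?_⟩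
  intro i hi
  have h := hv (t - (i + 1)) (by omega) (by omega)
  rwa [show t - (i + 1) + 1 = t - i by omega] at h

theorem IsDAG.not_edge_of_edge (hA : IsDAG A) {u v : Fin d} (huv : A u v = true) :
    A v u ≠ true := by
  intro hvu
  refine hA u 2 two_pos ⟨fun t => if t = 1 then v else u, by simp, by simp, ?_⟩
  intro i hi
  interval_cases i <;> simp [huv, hvu]

theorem IsDAG.eq_of_walk_eq (hA : IsDAG A) {v : ℕ → Fin d} {k : ℕ}
    (hv : ∀ i < k, A (v i) (v (i + 1)) = true) {s t : ℕ} (hs : s ≤ k) (ht : t ≤ k)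
    (hst : v s = v t) : s = t := by
  wlog hlt : s < t generalizing s t
  · rcases lt_or_eq_of_le (not_lt.mp hlt) with h | h
    · exact (this ht hs hst.symm h).symm
    · exact h.symm
  have hcycle := hasPath_of_edges (v := v) hlt.le fun i _ hi => hv i (by omega)
  rw [← hst] at hcycle
  exact (hA _ _ (by omega) hcycle).elim

theorem exists_source_of_forall_not_isCollider {p : ℕ → Fin d} {m : ℕ}
    (hstep : ∀ i < m, A (p i) (p (i + 1)) = true ∨ A (p (i + 1)) (p i) = true)
    (hnc : ∀ i, 0 < i → i < m → ¬ IsCollider A p i) :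
    ∃ j ≤ m, (∀ i < j, A (p (i + 1)) (p i) = true) ∧
      ∀ i, j ≤ i → i < m → A (p i) (p (i + 1)) = true := by
  classical
  have hex : ∃ i, i = m ∨ A (p i) (p (i + 1)) = true := ⟨m, Or.inl rfl⟩
  have hjm : Nat.find hex ≤ m := Nat.find_le (Or.inl rfl)
  refine ⟨Nat.find hex, hjm, fun i hi => ?_, fun i hji him => ?_⟩
  · exact (hstep i (by omega)).resolve_left (not_or.mp (Nat.find_min hex hi)).2
  · induction i, hji using Nat.le_induction with
    | base => exact (Nat.find_spec hex).resolve_left him.ne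
    | succ i hji ih =>
      have hfwd := ih (by omega)
      refine (hstep (i + 1) him).resolve_right fun hback => hnc (i + 1) (by omega) him ?_
      exact ⟨hfwd, hback⟩

theorem IsPath.exists_common_ancestor_of_forall_not_isCollider {x y : Fin d}
    {p : ℕ → Fin d} {m : ℕ} (hp : IsPath A x y p m)
    (hnc : ∀ i, 0 < i → i < m → ¬ IsCollider A p i) :
    ∃ a, Reachable A a x ∧ Reachable A a y := by
  obtain ⟨j, hjm, hback, hfwd⟩ := exists_source_of_forall_not_isCollider hp.step hnc
  exact ⟨p j,
    ⟨_, hp.first ▸ hasPath_of_reverse_edges (Nat.zero_le j) fun i _ hi => hback i hi⟩,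
    ⟨_, hp.last ▸ hasPath_of_edges hjm hfwd⟩⟩

theorem exists_minimal_trek {x y : Fin d} (h : ∃ a, Reachable A a x ∧ Reachable A a y) :
    ∃ a k l, HasPath A a x k ∧ HasPath A a y l ∧
      ∀ c k' l', HasPath A c x k' → HasPath A c y l' → k + l ≤ k' + l' := by
  classical
  have hex : ∃ n, ∃ a k l, k + l = n ∧ HasPath A a x k ∧ HasPath A a y l := by
    obtain ⟨a, ⟨k, hk⟩, ⟨l, hl⟩⟩ := h
    exact ⟨_, a, k, l, rfl, hk, hl⟩
  obtain ⟨a, k, l, hn, hk, hl⟩ := Nat.find_spec hex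
  exact ⟨a, k, l, hk, hl, fun c k' l' hk' hl' =>
    hn ▸ Nat.find_min' hex ⟨c, k', l', rfl, hk', hl'⟩⟩

def trekJoin (p q : ℕ → Fin d) (k : ℕ) : ℕ → Fin d :=
  fun t => if t ≤ k then p (k - t) else q (t - k)

section trekJoin

variable {p q : ℕ → Fin d} {k l : ℕ}

theorem trekJoin_of_le {t : ℕ} (ht : t ≤ k) : trekJoin p q k t = p (k - t) :=
  if_pos ht

theorem trekJoin_of_ge (hpq : p 0 = q 0) {t : ℕ} (ht : k ≤ t) :
    trekJoin p q k t = q (t - k) := by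
  rcases eq_or_lt_of_le ht with rfl | hlt
  · simp [trekJoin, hpq]
  · exact if_neg (by omega)

theorem trekJoin_edge_of_lt (hp : ∀ i < k, A (p i) (p (i + 1)) = true) {i : ℕ}
    (hi : i < k) :
    A (trekJoin p q k (i + 1)) (trekJoin p q k i) = true := by
  rw [trekJoin_of_le hi, trekJoin_of_le hi.le, show k - i = k - (i + 1) + 1 by omega]
  exact hp _ (by omega)

theorem trekJoin_edge_of_ge (hpq : p 0 = q 0) (hq : ∀ i < l, A (q i) (q (i + 1)) = true)
    {i : ℕ} (hki : k ≤ i) (hil : i < k + l) :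
    A (trekJoin p q k i) (trekJoin p q k (i + 1)) = true := by
  rw [trekJoin_of_ge hpq hki, trekJoin_of_ge hpq (by omega),
    show i + 1 - k = i - k + 1 by omega]
  exact hq _ (by omega)

theorem IsDAG.not_isCollider_trekJoin (hA : IsDAG A) (hpq : p 0 = q 0)
    (hp : ∀ i < k, A (p i) (p (i + 1)) = true) (hq : ∀ i < l, A (q i) (q (i + 1)) = true)
    {i : ℕ} (hi : 0 < i) (hil : i < k + l) :
    ¬ IsCollider A (trekJoin p q k) i := by
  rintro ⟨hin, hout⟩
  by_cases hik : i < k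
  · have h := trekJoin_edge_of_lt (q := q) hp (i := i - 1) (by omega)
    rw [Nat.sub_add_cancel hi] at h
    exact hA.not_edge_of_edge h hin
  · exact hA.not_edge_of_edge (trekJoin_edge_of_ge hpq hq (by omega) hil) hout

theorem IsDAG.trekJoin_ne_of_lt (hA : IsDAG A) (hpq : p 0 = q 0)
    (hp : ∀ i < k, A (p i) (p (i + 1)) = true) (hq : ∀ i < l, A (q i) (q (i + 1)) = true)
    (hmin : ∀ c k' l', HasPath A c (p k) k' → HasPath A c (q l) l' → k + l ≤ k' + l')
    {i j : ℕ} (hij : i < j) (hj : j ≤ k + l) : trekJoin p q k i ≠ trekJoin p q k j := by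
  intro heq
  by_cases hjk : j ≤ k
  · rw [trekJoin_of_le (hij.le.trans hjk), trekJoin_of_le hjk] at heq
    have := hA.eq_of_walk_eq hp (by omega) (by omega) heq
    omega
  by_cases hik : i ≤ k
  · rw [trekJoin_of_le hik, trekJoin_of_ge hpq (by omega)] at heq
    have hx := hasPath_of_edges (v := p) (Nat.sub_le k i) fun t _ ht => hp t ht
    have hy := hasPath_of_edges (v := q) (show j - k ≤ l by omega) fun t _ ht => hq t ht
    rw [heq] at hx
    have := hmin _ _ _ hx hy
    omega
  · rw [trekJoin_of_ge hpq (by omega), trekJoin_of_ge hpq (by omega)] at heq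
    have := hA.eq_of_walk_eq hq (by omega) (by omega) heq
    omega

theorem IsDAG.isDConnectingPath_trekJoin (hA : IsDAG A) (hpq : p 0 = q 0)
    (hp : ∀ i < k, A (p i) (p (i + 1)) = true) (hq : ∀ i < l, A (q i) (q (i + 1)) = true)
    (hxy : p k ≠ q l)
    (hmin : ∀ c k' l', HasPath A c (p k) k' → HasPath A c (q l) l' → k + l ≤ k' + l') :
    IsDConnectingPath A (p k) (q l) ∅ (trekJoin p q k) (k + l) := by
  have hpos : 1 ≤ k + l := by
    by_contra h
    obtain ⟨rfl, rfl⟩ : k = 0 ∧ l = 0 := by omega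
    exact hxy hpq
  refine ⟨⟨hpos, by simp [trekJoin_of_le], ?_, ?_, ?_⟩, fun _ _ _ _ => id, ?_⟩
  · simp [trekJoin_of_ge hpq (Nat.le_add_right k l)]
  · intro i hi j hj heq
    by_contra hne
    rcases lt_or_gt_of_ne hne with h | h
    · exact hA.trekJoin_ne_of_lt hpq hp hq hmin h hj heq
    · exact hA.trekJoin_ne_of_lt hpq hp hq hmin h hi heq.symm
  · intro i hi
    by_cases hik : i < k
    · exact .inr (trekJoin_edge_of_lt hp hik)
    · exact .inl (trekJoin_edge_of_ge hpq hq (by omega) hi)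
  · intro i hi hil hc
    exact (hA.not_isCollider_trekJoin hpq hp hq hi hil hc).elim

end trekJoin

end

/-- Theorem 3.2, 0th-order case: in a DAG, two distinct nodes are d-connected given
the empty set iff they have a common ancestor (possibly one of the two nodes). -/
theorem dConnected_empty_iff_common_ancestor {d : ℕ} (A : Fin d → Fin d → Bool)
    (hA : IsDAG A) (x y : Fin d) (hxy : x ≠ y) :
    DConnected A x y ∅ ↔ ∃ a : Fin d, Reachable A a x ∧ Reachable A a y := by
  constructor
  · rintro ⟨p, m, hp, -, hcol⟩
    refine hp.exists_common_ancestor_of_forall_not_isCollider fun i hi him hc => ?_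
    obtain ⟨w, hw, -⟩ := hcol i hi him hc
    exact hw
  · intro h
    obtain ⟨a, k, l, ⟨p, hpa, rfl, hp⟩, ⟨q, hqa, rfl, hq⟩, hmin⟩ :=
      exists_minimal_trek h
    exact ⟨_, _, hA.isDConnectingPath_trekJoin (hpa.trans hqa.symm) hp hq hxy hmin⟩
end

section
/- Let A : Fin d → Fin d → Bool be a DAG and let x, y, z be pairwise distinct nodes. Then x and y are d-connected given {z} in A if and only if: either there exists a node w with w ⤳ x and w ⤳ y in A₋z; or both of the following hold: (i) there exist nodes a ≠ z and w with w ⤳ x and w ⤳ a in A₋z and a ⤳ z in A, and (ii) there exist nodes b ≠ z and w′ with w′ ⤳ y and w′ ⤳ b in A₋z and b ⤳ z in A. (Theorem 3.2, 1st-order case.) -/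
/-- The node-deleted graph `A₋z`. -/
def delNode {d : ℕ} (A : Fin d → Fin d → Bool) (z : Fin d) : Fin d → Fin d → Bool :=
  fun u v => A u v && decide (u ≠ z) && decide (v ≠ z)


/-!
A path without colliders is a trek `x ← ⋯ ← w → ⋯ → y`; given `{z}` it is open exactly when
it avoids `z`, i.e. when it lives in `A₋z`. On a path with colliders, the stretch from `x` to
the first collider `c` is such a trek ending at a parent `a` of `c`, and `c ⤳ z`; symmetrically
from `y`. Conversely, treks in `A₋z` ending at parents of `z` glue at `z` into a walk on which
`z` is the only collider. A shortest d-connecting walk is a path: at a repeated node the walk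
can be short-cut, and a collider created there is an ancestor of a collider of the walk.
-/

section Sequences

variable {α : Type*}

def seqAppend (p : ℕ → α) (m : ℕ) (q : ℕ → α) : ℕ → α :=
  fun t => if t ≤ m then p t else q (t - m)

variable {p q : ℕ → α} {m t : ℕ}

theorem seqAppend_of_le (ht : t ≤ m) : seqAppend p m q t = p t := if_pos ht

theorem seqAppend_of_ge (h : q 0 = p m) (ht : m ≤ t) : seqAppend p m q t = q (t - m) := by
  unfold seqAppend
  split_ifs with htm
  · obtain rfl : t = m := le_antisymm htm ht
    rw [Nat.sub_self, h]
  · rfl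

theorem seqAppend_const_succ (c : α) : seqAppend p m (fun _ => c) (m + 1) = c :=
  if_neg (Nat.not_succ_le_self m)

theorem seqAppend_const_chain {r : α → α → Prop} {c : α}
    (hp : ∀ i < m, r (p i) (p (i + 1))) (hc : r (p m) c) :
    ∀ i < m + 1, r (seqAppend p m (fun _ => c) i) (seqAppend p m (fun _ => c) (i + 1)) := by
  intro i hi
  rcases (Nat.lt_succ_iff.1 hi).lt_or_eq with hi | rfl
  · rw [seqAppend_of_le hi.le, seqAppend_of_le hi]
    exact hp i hi
  · rwa [seqAppend_const_succ, seqAppend_of_le le_rfl]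

end Sequences

variable {d : ℕ} {A : Fin d → Fin d → Bool} {Z : Set (Fin d)} {x y z a u v w : Fin d}
  {p q : ℕ → Fin d} {i j k m n t : ℕ}

section Reachability

theorem Reachable.refl (A : Fin d → Fin d → Bool) (x : Fin d) : Reachable A x x :=
  ⟨0, fun _ => x, rfl, rfl, fun i hi => absurd hi i.not_lt_zero⟩

theorem reachable_iff_reflTransGen :
    Reachable A x y ↔ Relation.ReflTransGen (fun u v => A u v = true) x y := by
  constructor
  · rintro ⟨k, p, rfl, rfl, hp⟩
    suffices ∀ j ≤ k, Relation.ReflTransGen (fun u v => A u v = true) (p 0) (p j) from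
      this k le_rfl
    intro j hj
    induction j with
    | zero => exact .refl
    | succ j ih => exact (ih (by omega)).tail (hp j (by omega))
  · intro h
    induction h with
    | refl => exact .refl A x
    | tail _ hvw ih =>
      obtain ⟨k, p, hp0, hpk, hp⟩ := ih
      exact ⟨k + 1, seqAppend p k fun _ => _, by rw [seqAppend_of_le k.zero_le, hp0],
        seqAppend_const_succ _, seqAppend_const_chain (r := fun u v => A u v = true) hp
          (hpk ▸ hvw)⟩

theorem Reachable.trans (hxy : Reachable A x y) (hyz : Reachable A y z) : Reachable A x z :=
  reachable_iff_reflTransGen.2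
    ((reachable_iff_reflTransGen.1 hxy).trans (reachable_iff_reflTransGen.1 hyz))

theorem Reachable.single (h : A x y = true) : Reachable A x y :=
  reachable_iff_reflTransGen.2 (.single h)

theorem Reachable.head (h : A x y = true) (hyz : Reachable A y z) : Reachable A x z :=
  (single h).trans hyz

theorem Reachable.tail (hxy : Reachable A x y) (h : A y z = true) : Reachable A x z :=
  hxy.trans (single h)

theorem delNode_eq_true : delNode A z u v = true ↔ A u v = true ∧ u ≠ z ∧ v ≠ z := by
  simp [delNode, and_assoc]

theorem Reachable.exists_delNode_parent (h : Reachable A x z) (hx : x ≠ z) :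
    ∃ u, Reachable (delNode A z) x u ∧ A u z = true := by
  rw [reachable_iff_reflTransGen] at h
  induction h using Relation.ReflTransGen.head_induction_on with
  | refl => exact absurd rfl hx
  | @head x y hxy _ ih =>
    by_cases hy : y = z
    · exact ⟨x, .refl _ x, hy ▸ hxy⟩
    · obtain ⟨u, hyu, huz⟩ := ih hy
      exact ⟨u, hyu.head (delNode_eq_true.2 ⟨hxy, hx, hy⟩), huz⟩

theorem IsDAG.asymm (hA : IsDAG A) (h : A u v = true) : A v u ≠ true := fun h' =>
  hA u 2 two_pos ⟨fun i => if i = 1 then v else u, rfl, rfl, fun i hi => by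
    interval_cases i <;> simpa⟩

theorem IsDAG.irrefl (hA : IsDAG A) : A u u ≠ true := fun h => hA.asymm h h

end Reachability

section Walks

def IsWalk (A : Fin d → Fin d → Bool) (p : ℕ → Fin d) (m : ℕ) : Prop :=
  ∀ i < m, A (p i) (p (i + 1)) = true ∨ A (p (i + 1)) (p i) = true

theorem IsWalk.delNode (hp : IsWalk A p m) (hz : ∀ t ≤ m, p t ≠ z) :
    IsWalk (delNode A z) p m := fun i hi => by
  simp only [delNode_eq_true]
  exact (hp i hi).imp (⟨·, hz i hi.le, hz _ hi⟩) (⟨·, hz _ hi, hz i hi.le⟩)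

theorem IsCollider.of_delNode (h : IsCollider (delNode A z) p t) : IsCollider A p t :=
  ⟨(delNode_eq_true.1 h.1).1, (delNode_eq_true.1 h.2).1⟩

theorem isCollider_congr {s : ℕ} (h₀ : q (s - 1) = p (t - 1)) (h₁ : q s = p t)
    (h₂ : q (s + 1) = p (t + 1)) : IsCollider A q s ↔ IsCollider A p t := by
  simp only [IsCollider, h₀, h₁, h₂]

theorem isCollider_reverse (h0 : 0 < t) (ht : t ≤ m) :
    IsCollider A (fun s => p (m - s)) t ↔ IsCollider A p (m - t) := by
  simp only [IsCollider, show m - (t - 1) = m - t + 1 by omega,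
    show m - (t + 1) = m - t - 1 by omega, and_comm]

theorem isCollider_seqAppend_self (h : q 0 = p m) :
    IsCollider A (seqAppend p m q) m ↔ A (p (m - 1)) (p m) = true ∧ A (q 1) (p m) = true := by
  rw [IsCollider, seqAppend_of_le (Nat.sub_le m 1), seqAppend_of_le le_rfl,
    seqAppend_of_ge h (Nat.le_add_right m 1), Nat.add_sub_cancel_left]

theorem IsWalk.exists_isCollider_reachable {i k : ℕ} (hw : IsWalk A p m)
    (hin : A (p (i - 1)) (p i) = true) (hik : i ≤ k) (hkm : k < m)
    (hk : A (p k) (p (k + 1)) ≠ true) :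
    ∃ c, i ≤ c ∧ c ≤ k ∧ IsCollider A p c ∧ Reachable A (p i) (p c) := by
  by_cases hfw : A (p i) (p (i + 1)) = true
  · have hik' : i < k := lt_of_le_of_ne hik (by rintro rfl; exact hk hfw)
    obtain ⟨c, hic, hck, hc, hreach⟩ :=
      hw.exists_isCollider_reachable (i := i + 1) (by simpa using hfw) hik' hkm hk
    exact ⟨c, by omega, hck, hc, hreach.head hfw⟩
  · exact ⟨i, le_rfl, hik, ⟨hin, (hw i (by omega)).resolve_left hfw⟩, .refl A _⟩
termination_by k - i

theorem IsWalk.exists_common_ancestor (hw : IsWalk A p n)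
    (hnc : ∀ t, 0 < t → t < n → ¬ IsCollider A p t) :
    ∃ w, Reachable A w (p 0) ∧ Reachable A w (p n) := by
  obtain ⟨w, hw0, hwn, -⟩ : ∃ w, Reachable A w (p 0) ∧ Reachable A w (p n) ∧
      (w = p n ∨ 0 < n ∧ A (p (n - 1)) (p n) = true) := by
    induction n with
    | zero => exact ⟨p 0, .refl A _, .refl A _, .inl rfl⟩
    | succ n ih =>
      obtain ⟨w, hw0, hwn, htop⟩ :=
        ih (fun i hi => hw i (by omega)) fun t h0 ht => hnc t h0 (by omega)
      rcases hw n n.lt_succ_self with hfw | hbw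
      · exact ⟨w, hw0, hwn.tail hfw, .inr ⟨n.succ_pos, hfw⟩⟩
      · rcases htop with rfl | ⟨hn, hin⟩
        · exact ⟨p (n + 1), hw0.head hbw, .refl A _, .inl rfl⟩
        · exact absurd ⟨hin, hbw⟩ (hnc n hn n.lt_succ_self)
  exact ⟨w, hw0, hwn⟩

end Walks

section DConnectingWalks

def IsUnblockedAt (A : Fin d → Fin d → Bool) (Z : Set (Fin d)) (p : ℕ → Fin d) (t : ℕ) :
    Prop :=
  (¬ IsCollider A p t → p t ∉ Z) ∧ (IsCollider A p t → ∃ w ∈ Z, Reachable A (p t) w)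

theorem IsUnblockedAt.congr {s : ℕ} (h : IsUnblockedAt A Z p t) (hv : q s = p t)
    (hc : IsCollider A q s ↔ IsCollider A p t) : IsUnblockedAt A Z q s := by
  rwa [IsUnblockedAt, hv, hc]

structure IsDConnectingWalk (A : Fin d → Fin d → Bool) (x y : Fin d) (Z : Set (Fin d))
    (p : ℕ → Fin d) (m : ℕ) : Prop where
  first : p 0 = x
  last : p m = y
  isWalk : IsWalk A p m
  unblocked : ∀ t, 0 < t → t < m → IsUnblockedAt A Z p t

theorem IsDConnectingPath.isDConnectingWalk (h : IsDConnectingPath A x y Z p m) :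
    IsDConnectingWalk A x y Z p m :=
  ⟨h.1.first, h.1.last, h.1.step, fun t h0 ht => ⟨h.2.1 t h0 ht, h.2.2 t h0 ht⟩⟩

theorem isDConnectingWalk_of_chain (hA : IsDAG A) (hp : ∀ i < k, A (p i) (p (i + 1)) = true)
    (hZ : ∀ i, 0 < i → i < k → p i ∉ Z) : IsDConnectingWalk A (p 0) (p k) Z p k :=
  ⟨rfl, rfl, fun i hi => .inl (hp i hi),
    fun t h0 ht => ⟨fun _ => hZ t h0 ht, fun hc => absurd hc.2 (hA.asymm (hp t ht))⟩⟩

namespace IsDConnectingWalk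

theorem take (h : IsDConnectingWalk A x y Z p m) (hk : k ≤ m) :
    IsDConnectingWalk A x (p k) Z p k :=
  ⟨h.first, rfl, fun i hi => h.isWalk i (by omega), fun t h0 ht => h.unblocked t h0 (by omega)⟩

theorem drop (h : IsDConnectingWalk A x y Z p m) (hk : k ≤ m) :
    IsDConnectingWalk A (p k) y Z (fun s => p (k + s)) (m - k) where
  first := rfl
  last := by simp only [Nat.add_sub_cancel' hk, h.last]
  isWalk i hi := by simpa only [Nat.add_assoc] using h.isWalk (k + i) (by omega)
  unblocked t h0 ht := (h.unblocked (k + t) (by omega) (by omega)).congr rfl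
    (isCollider_congr (by simp only [show k + (t - 1) = k + t - 1 by omega]) rfl rfl)

theorem reverse (h : IsDConnectingWalk A x y Z p m) :
    IsDConnectingWalk A y x Z (fun s => p (m - s)) m where
  first := by simp only [Nat.sub_zero, h.last]
  last := by simp only [Nat.sub_self, h.first]
  isWalk i hi := by
    have := h.isWalk (m - (i + 1)) (by omega)
    rwa [show m - (i + 1) + 1 = m - i by omega, or_comm] at this
  unblocked t h0 ht :=
    (h.unblocked (m - t) (by omega) (by omega)).congr rfl (isCollider_reverse h0 ht.le)

theorem append (hp : IsDConnectingWalk A x v Z p m) (hq : IsDConnectingWalk A v y Z q n)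
    (hv : 0 < m → 0 < n → IsUnblockedAt A Z (seqAppend p m q) m) :
    IsDConnectingWalk A x y Z (seqAppend p m q) (m + n) := by
  have hqp : q 0 = p m := hq.first.trans hp.last.symm
  refine ⟨by rw [seqAppend_of_le m.zero_le, hp.first],
    by rw [seqAppend_of_ge hqp (by omega), Nat.add_sub_cancel_left, hq.last],
    fun i hi => ?_, fun t h0 ht => ?_⟩
  · rcases lt_or_ge i m with him | hmi
    · rw [seqAppend_of_le him.le, seqAppend_of_le him]
      exact hp.isWalk i him
    · rw [seqAppend_of_ge hqp hmi, seqAppend_of_ge hqp (by omega), Nat.sub_add_comm hmi]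
      exact hq.isWalk (i - m) (by omega)
  · rcases lt_trichotomy t m with htm | rfl | hmt
    · exact (hp.unblocked t h0 htm).congr (seqAppend_of_le htm.le)
        (isCollider_congr (seqAppend_of_le (by omega)) (seqAppend_of_le htm.le)
          (seqAppend_of_le htm))
    · exact hv h0 (by omega)
    · refine (hq.unblocked (t - m) (by omega) (by omega)).congr (seqAppend_of_ge hqp hmt.le)
        (isCollider_congr ?_ (seqAppend_of_ge hqp hmt.le) ?_)
      · rw [seqAppend_of_ge hqp (by omega), Nat.sub_right_comm]
      · rw [seqAppend_of_ge hqp (by omega), Nat.sub_add_comm hmt.le]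

theorem isUnblockedAt_shortcut (h : IsDConnectingWalk A x y Z p m) (hi : 0 < i) (hij : i < j)
    (hj : j < m) (heq : p i = p j) :
    IsUnblockedAt A Z (seqAppend p i fun s => p (j + s)) i := by
  rw [IsUnblockedAt, isCollider_seqAppend_self heq.symm, seqAppend_of_le le_rfl, heq]
  refine ⟨fun hnc => ?_, fun ⟨hin, hjn⟩ => ?_⟩
  · by_cases hin : A (p (i - 1)) (p j) = true
    · exact (h.unblocked j (by omega) hj).1 fun hc => hnc ⟨hin, hc.2⟩
    · exact heq ▸ (h.unblocked i hi (by omega)).1 fun hc => hin (heq ▸ hc.1)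
  · by_cases hjc : A (p (j - 1)) (p j) = true
    · exact (h.unblocked j (by omega) hj).2 ⟨hjc, hjn⟩
    -- following the forward edges out of `p i` must end at a collider before `p j`
    obtain ⟨c, hic, hcj, hc, hreach⟩ := h.isWalk.exists_isCollider_reachable (heq ▸ hin)
      (k := j - 1) (by omega) (by omega) (by rwa [Nat.sub_add_cancel (by omega)])
    obtain ⟨w, hw, hcw⟩ := (h.unblocked c (by omega) (by omega)).2 hc
    exact ⟨w, hw, heq ▸ hreach.trans hcw⟩

theorem shortcut (h : IsDConnectingWalk A x y Z p m) (hij : i < j) (hj : j ≤ m)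
    (heq : p i = p j) :
    IsDConnectingWalk A x y Z (seqAppend p i fun s => p (j + s)) (i + (m - j)) :=
  (h.take (hij.le.trans hj)).append (heq ▸ h.drop hj) fun hi hjm =>
    h.isUnblockedAt_shortcut hi hij (by omega) heq

theorem dConnected (h : IsDConnectingWalk A x y Z p m) (hxy : x ≠ y) : DConnected A x y Z := by
  induction m using Nat.strong_induction_on generalizing p with
  | _ m ih =>
  by_cases hnd : ∀ i ≤ m, ∀ j ≤ m, p i = p j → i = j
  · have hm : 1 ≤ m :=
      Nat.one_le_iff_ne_zero.2 fun hm => hxy (by rw [← h.first, ← h.last, hm])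
    exact ⟨p, m, ⟨hm, h.first, h.last, hnd, h.isWalk⟩, fun t h0 ht => (h.unblocked t h0 ht).1,
      fun t h0 ht => (h.unblocked t h0 ht).2⟩
  · obtain ⟨i, j, hij, hj, heq⟩ : ∃ i j, i < j ∧ j ≤ m ∧ p i = p j := by
      push Not at hnd
      obtain ⟨i, hi, j, hj, heq, hne⟩ := hnd
      rcases hne.lt_or_gt with hlt | hlt
      · exact ⟨i, j, hlt, hj, heq⟩
      · exact ⟨j, i, hlt, hi, heq.symm⟩
    exact ih (i + (m - j)) (by omega) (h.shortcut hij hj heq)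

theorem exists_common_ancestor (h : IsDConnectingWalk A x y {z} p m) (hxz : x ≠ z)
    (hyz : y ≠ z) (hnc : ∀ t, 0 < t → t < m → ¬ IsCollider A p t) :
    ∃ w, Reachable (delNode A z) w x ∧ Reachable (delNode A z) w y := by
  have hz : ∀ t ≤ m, p t ≠ z := by
    intro t ht
    rcases Nat.eq_zero_or_pos t with rfl | h0
    · rwa [h.first]
    rcases ht.lt_or_eq with htm | rfl
    · exact (h.unblocked t h0 htm).1 (hnc t h0 htm)
    · rwa [h.last]
  rw [← h.first, ← h.last]
  exact (h.isWalk.delNode hz).exists_common_ancestor fun t h0 ht hc => hnc t h0 ht hc.of_delNode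

theorem exists_ancestor_of_isCollider (h : IsDConnectingWalk A x y {z} p m) (hxz : x ≠ z)
    (hc : ∃ t, 0 < t ∧ t < m ∧ IsCollider A p t) :
    ∃ a, a ≠ z ∧ ∃ w,
      Reachable (delNode A z) w x ∧ Reachable (delNode A z) w a ∧ Reachable A a z := by
  classical
  obtain ⟨h0, hm, hcol⟩ := Nat.find_spec hc
  have hnc : ∀ t, 0 < t → t < Nat.find hc → ¬ IsCollider A p t :=
    fun t h0 ht hct => Nat.find_min hc ht ⟨h0, by omega, hct⟩
  have hprev : p (Nat.find hc - 1) ≠ z := by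
    rcases Nat.eq_zero_or_pos (Nat.find hc - 1) with h1 | h1
    · rwa [h1, h.first]
    · exact (h.unblocked _ h1 (by omega)).1 (hnc _ h1 (by omega))
  obtain ⟨w, hwx, hwa⟩ := (h.take (k := Nat.find hc - 1) (by omega)).exists_common_ancestor
    hxz hprev fun t h0 ht => hnc t h0 (by omega)
  obtain ⟨_, rfl, hcz⟩ := (h.unblocked _ h0 hm).2 hcol
  exact ⟨_, hprev, w, hwx, hwa, hcz.head hcol.1⟩

end IsDConnectingWalk

theorem isDConnectingWalk_trek (hA : IsDAG A) {P Q : ℕ → Fin d} {l : ℕ}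
    (hP : ∀ i < k, A (P i) (P (i + 1)) = true) (hQ : ∀ i < l, A (Q i) (Q (i + 1)) = true)
    (h0 : Q 0 = P 0) (hPZ : ∀ i < k, P i ∉ Z) (hQZ : ∀ i, 0 < i → i < l → Q i ∉ Z) :
    IsDConnectingWalk A (P k) (Q l) Z (seqAppend (fun s => P (k - s)) k Q) (k + l) := by
  have hx := (isDConnectingWalk_of_chain hA hP fun i _ hi => hPZ i hi).reverse
  have hy := isDConnectingWalk_of_chain hA hQ hQZ
  rw [h0] at hy
  refine hx.append hy fun hk _ => ⟨fun _ => ?_, fun hc => absurd ?_ (hA.asymm (hP 0 hk))⟩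
  · rw [seqAppend_of_le le_rfl, Nat.sub_self]
    exact hPZ 0 hk
  · have := ((isCollider_seqAppend_self (by simpa using h0)).1 hc).1
    simpa only [Nat.sub_sub_self hk, Nat.sub_self] using this

theorem exists_isDConnectingWalk_of_common_ancestor (hA : IsDAG A)
    (hx : Reachable (delNode A z) w x) (hy : Reachable (delNode A z) w y) :
    ∃ p m, IsDConnectingWalk A x y {z} p m := by
  obtain ⟨k, P, hP0, rfl, hP⟩ := hx
  obtain ⟨l, Q, hQ0, rfl, hQ⟩ := hy
  simp only [delNode_eq_true] at hP hQ
  exact ⟨_, _, isDConnectingWalk_trek hA (fun i hi => (hP i hi).1) (fun i hi => (hQ i hi).1)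
    (hQ0.trans hP0.symm) (fun i hi => (hP i hi).2.1) fun i _ hi => (hQ i hi).2.1⟩

theorem exists_isDConnectingWalk_into (hA : IsDAG A) (hx : Reachable (delNode A z) w x)
    (ha : Reachable (delNode A z) w a) (haz : Reachable A a z) (ha' : a ≠ z) :
    ∃ p m, IsDConnectingWalk A x z {z} p m ∧ A (p (m - 1)) z = true := by
  obtain ⟨u, hau, huz⟩ := haz.exists_delNode_parent ha'
  have hu : u ≠ z := by
    rintro rfl
    exact hA.irrefl huz
  obtain ⟨k, P, hP0, rfl, hP⟩ := hx
  obtain ⟨l, Q, hQ0, hQl, hQ⟩ := ha.trans hau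
  simp only [delNode_eq_true] at hP hQ
  set Q' := seqAppend Q l fun _ => z with hQ'
  have hQ'0 : Q' 0 = P 0 := by rw [hQ', seqAppend_of_le l.zero_le, hQ0, hP0]
  have hQ'l : Q' l = u := by rw [hQ', seqAppend_of_le le_rfl, hQl]
  have hQ'Z : ∀ i, 0 < i → i < l + 1 → Q' i ∉ ({z} : Set (Fin d)) := by
    intro i _ hi
    rw [hQ', seqAppend_of_le (Nat.lt_succ_iff.1 hi)]
    rcases (Nat.lt_succ_iff.1 hi).lt_or_eq with hi | rfl
    · exact (hQ i hi).2.1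
    · rwa [hQl]
  have hwalk := isDConnectingWalk_trek hA (fun i hi => (hP i hi).1)
    (seqAppend_const_chain (r := fun u v => A u v = true) (fun i hi => (hQ i hi).1) (hQl ▸ huz))
    hQ'0 (fun i hi => (hP i hi).2.1) hQ'Z
  rw [seqAppend_const_succ] at hwalk
  refine ⟨_, _, hwalk, ?_⟩
  rwa [show k + (l + 1) - 1 = k + l by omega, seqAppend_of_ge (hQ'0.trans (by rw [Nat.sub_self]))
    (by omega), Nat.add_sub_cancel_left, hQ'l]

theorem dConnected_of_walks_into (hxy : x ≠ y) (hz : z ∈ Z)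
    (hp : IsDConnectingWalk A x z Z p m) (hpz : A (p (m - 1)) z = true)
    (hq : IsDConnectingWalk A y z Z q n) (hqz : A (q (n - 1)) z = true) :
    DConnected A x y Z := by
  have hjunction : seqAppend p m (fun s => q (n - s)) m = z := by
    rw [seqAppend_of_le le_rfl, hp.last]
  refine (hp.append hq.reverse fun _ _ => ⟨fun hnc => absurd ?_ hnc, fun _ => ?_⟩).dConnected
    hxy
  · rw [isCollider_seqAppend_self (hq.reverse.first.trans hp.last.symm), hp.last]
    exact ⟨hpz, hqz⟩
  · exact ⟨z, hz, hjunction ▸ .refl A z⟩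

end DConnectingWalks

/-- Theorem 3.2, 1st-order case: in a DAG, pairwise distinct nodes `x` and `y` are
d-connected given `{z}` iff either they have a common ancestor in `A₋z`, or both
(i) some `a ≠ z` has a common ancestor with `x` in `A₋z` and reaches `z` in `A`, and
(ii) some `b ≠ z` has a common ancestor with `y` in `A₋z` and reaches `z` in `A`. -/
theorem dConnected_singleton_iff {d : ℕ} (A : Fin d → Fin d → Bool) (hA : IsDAG A)
    (x y z : Fin d) (hxy : x ≠ y) (hxz : x ≠ z) (hyz : y ≠ z) :
    DConnected A x y {z} ↔
      (∃ w : Fin d, Reachable (delNode A z) w x ∧ Reachable (delNode A z) w y) ∨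
      ((∃ a : Fin d, a ≠ z ∧ ∃ w : Fin d,
          Reachable (delNode A z) w x ∧ Reachable (delNode A z) w a ∧ Reachable A a z) ∧
       (∃ b : Fin d, b ≠ z ∧ ∃ w' : Fin d,
          Reachable (delNode A z) w' y ∧ Reachable (delNode A z) w' b ∧ Reachable A b z)) := by
  constructor
  · rintro ⟨p, m, hp⟩
    have hw := hp.isDConnectingWalk
    by_cases hc : ∃ t, 0 < t ∧ t < m ∧ IsCollider A p t
    · obtain ⟨t, h0, htm, htc⟩ := hc
      have hc' : ∃ s, 0 < s ∧ s < m ∧ IsCollider A (fun s => p (m - s)) s :=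
        ⟨m - t, by omega, by omega, by rwa [isCollider_reverse (by omega) (by omega),
          Nat.sub_sub_self htm.le]⟩
      exact .inr ⟨hw.exists_ancestor_of_isCollider hxz ⟨t, h0, htm, htc⟩,
        hw.reverse.exists_ancestor_of_isCollider hyz hc'⟩
    · push Not at hc
      exact .inl (hw.exists_common_ancestor hxz hyz hc)
  · rintro (⟨w, hx, hy⟩ | ⟨⟨a, ha, w, hx, hwa, haz⟩, ⟨b, hb, w', hy, hwb, hbz⟩⟩)
    · obtain ⟨p, m, hp⟩ := exists_isDConnectingWalk_of_common_ancestor hA hx hy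
      exact hp.dConnected hxy
    · obtain ⟨p, m, hp, hpz⟩ := exists_isDConnectingWalk_into hA hx hwa haz ha
      obtain ⟨q, n, hq, hqz⟩ := exists_isDConnectingWalk_into hA hy hwb hbz hb
      exact dConnected_of_walks_into hxy rfl hp hpz hq hqz
end

section
/- Let W : Fin d → Fin d → ℝ have all entries in [0,1], let α ∈ (0,1], and let 0 ≤ l < d. Then for all nodes x, y: R̃_W^(l)(x,y) ≤ log 𝔼_{A∼Bern(W)}[R_A^(l)(x,y)] and Ũ_W^(l)(x,y) ≤ log 𝔼_{A∼Bern(W)}[1 − R_A^(l)(x,y)], where R_A^(l)(x,y) is interpreted as the {0,1}-valued indicator of the reachability formula, the inequalities are in the extended reals, and log 0 = −∞. (Lemma 3.6, Reachability Percolation Lower Bound.) -/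
open MeasureTheory
open scoped ENNReal

noncomputable section

/-- The reachability formula `R_A^(l)(x,y)`, defined recursively. -/
def ReachF {d : ℕ} (A : Fin d → Fin d → Bool) : ℕ → Fin d → Fin d → Bool
  | 0, x, y => decide (x = y)
  | l + 1, x, y =>
      (decide (∃ u : Fin d, ReachF A l x u = true ∧ A u y = true)) || ReachF A l x y

/-- Bernoulli measure on `Bool` with parameter `p`. -/
def bernoulliMeasure (p : ℝ) : Measure Bool :=
  ENNReal.ofReal p • Measure.dirac true + ENNReal.ofReal (1 - p) • Measure.dirac false

instance (p : ℝ) : IsFiniteMeasure (bernoulliMeasure p) := by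
  constructor
  have h : bernoulliMeasure p Set.univ = ENNReal.ofReal p + ENNReal.ofReal (1 - p) := by
    simp [bernoulliMeasure]
  rw [h]
  exact ENNReal.add_lt_top.2 ⟨ENNReal.ofReal_lt_top, ENNReal.ofReal_lt_top⟩

/-- `Bern(W)`: the product over all pairs `(u, v)` of Bernoulli measures, under which
the coordinates `A u v` are independent with `ℙ(A u v = true) = W u v`. -/
def bernMeasure {d : ℕ} (W : Fin d → Fin d → ℝ) : Measure (Fin d → Fin d → Bool) :=
  Measure.pi fun u => Measure.pi fun v => bernoulliMeasure (W u v)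

/-- Exponential on extended reals, with `exp (−∞) = 0` and `exp ⊤ = ⊤`. -/
def eexp (x : EReal) : ℝ≥0∞ :=
  if x = ⊥ then 0 else if x = ⊤ then ⊤ else ENNReal.ofReal (Real.exp x.toReal)

/-- Logarithm on `ℝ≥0∞`, with `log 0 = −∞` and `log ⊤ = ⊤`. -/
def elog (x : ℝ≥0∞) : EReal :=
  if x = 0 then ⊥ else if x = ⊤ then ⊤ else ((Real.log x.toReal : ℝ) : EReal)

/-- LogMeanExp soft disjunction `T⊕_α` with temperature `α` over a finite family. -/
def softOr (α : ℝ) {ι : Type*} [Fintype ι] (x : ι → EReal) : EReal :=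
  (α : EReal) * elog ((∑ i, eexp (((α⁻¹ : ℝ) : EReal) * x i)) / (Fintype.card ι : ℝ≥0∞))

/-- Soft graph reachability `R̃_W^(l)`. -/
def softReach {d : ℕ} (α : ℝ) (W : Fin d → Fin d → ℝ) : ℕ → Fin d → Fin d → EReal
  | 0, x, y => if x = y then 0 else ⊥
  | l + 1, x, y =>
      softOr α
        (Fin.cons (softReach α W l x y)
          (fun u : Fin d => softReach α W l x u + elog (ENNReal.ofReal (W u y))) :
          Fin (d + 1) → EReal)

/-- Soft graph unreachability `Ũ_W^(l)`. -/
def softUnreach {d : ℕ} (α : ℝ) (W : Fin d → Fin d → ℝ) : ℕ → Fin d → Fin d → EReal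
  | 0, x, y => if x ≠ y then 0 else ⊥
  | l + 1, x, y =>
      (∑ u : Fin d,
        softOr α ![softUnreach α W l x u, elog (ENNReal.ofReal (1 - W u y))])
        + softUnreach α W l x y

/-!
Reaching `y` from `x` within `l` steps is an increasing event of the random graph, and not
reaching it a decreasing one. Since `Bern(W)` is a product measure, Harris's inequality (the FKG
inequality for product measures) gives `ℙ(R^(l+1)(x,y)) ≥ ℙ(R^(l)(x,u)) · W u y`,
`ℙ(R^(l+1)(x,y)) ≥ ℙ(R^(l)(x,y))` and
`ℙ(¬R^(l+1)(x,y)) ≥ ℙ(¬R^(l)(x,y)) · ∏ᵤ ℙ(¬(R^(l)(x,u) ∧ A u y))`.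
The soft disjunction is a mean, hence at most the largest of its arguments, so induction on `l`
carries these bounds through the recursions defining `R̃` and `Ũ`.
-/

lemma elog_eq_log : elog = ENNReal.log := rfl

lemma eexp_eq_exp : eexp = EReal.exp := by
  funext x
  induction x using EReal.rec <;> simp [eexp]

lemma elog_mono : Monotone elog := ENNReal.log_monotone

lemma elog_mul (a b : ℝ≥0∞) : elog (a * b) = elog a + elog b := ENNReal.log_mul_add

lemma elog_prod {ι : Type*} (s : Finset ι) (f : ι → ℝ≥0∞) :
    elog (∏ i ∈ s, f i) = ∑ i ∈ s, elog (f i) := by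
  classical
  induction s using Finset.induction_on with
  | empty => simp [elog_eq_log]
  | insert i s hi ih => rw [Finset.prod_insert hi, Finset.sum_insert hi, elog_mul, ih]

section SoftOr

variable {ι : Type*} [Fintype ι] {α : ℝ}

lemma softOr_mono (hα : 0 ≤ α) : Monotone (softOr α : (ι → EReal) → EReal) := by
  intro x y hxy
  rw [softOr, softOr, elog_eq_log, eexp_eq_exp]
  gcongr with i
  exact hxy i

lemma softOr_const [Nonempty ι] (hα : 0 < α) (c : EReal) :
    softOr α (fun _ : ι => c) = c := by
  rw [softOr, elog_eq_log, eexp_eq_exp, Finset.sum_const, Finset.card_univ, nsmul_eq_mul',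
    ENNReal.mul_div_cancel_right (by simp) (ENNReal.natCast_ne_top _), EReal.log_exp,
    ← mul_assoc, ← EReal.coe_mul, mul_inv_cancel₀ hα.ne', EReal.coe_one, one_mul]

lemma softOr_le [Nonempty ι] (hα : 0 < α) {x : ι → EReal} {c : EReal} (h : ∀ i, x i ≤ c) :
    softOr α x ≤ c :=
  softOr_const (ι := ι) hα c ▸ softOr_mono hα.le h

end SoftOr

section Harris

open scoped NNReal SetFamily

variable {α : Type*} [MeasurableSpace α]

lemma measure_singleton_mul_singleton_eq_inf_sup [LinearOrder α] (μ : Measure α) (a b : α) :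
    μ {a} * μ {b} = μ {a ⊓ b} * μ {a ⊔ b} := by
  rcases le_total a b with h | h <;> simp [h, mul_comm]

lemma Measure.pi_singleton_mul_singleton_le_inf_sup {ι : Type*} [Fintype ι] {β : ι → Type*}
    [∀ i, Lattice (β i)] [∀ i, MeasurableSpace (β i)]
    (μ : ∀ i, Measure (β i)) [∀ i, SigmaFinite (μ i)]
    (hμ : ∀ i a b, μ i {a} * μ i {b} ≤ μ i {a ⊓ b} * μ i {a ⊔ b}) (a b : ∀ i, β i) :
    Measure.pi μ {a} * Measure.pi μ {b} ≤ Measure.pi μ {a ⊓ b} * Measure.pi μ {a ⊔ b} := by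
  simp only [← Set.univ_pi_singleton, Measure.pi_pi, ← Finset.prod_mul_distrib]
  exact Finset.prod_le_prod' fun i _ => hμ i (a i) (b i)

variable [MeasurableSingletonClass α] [DistribLattice α] [Fintype α] {μ : Measure α}

theorem measure_mul_measure_le_infs_mul_sups [IsFiniteMeasure μ]
    (hμ : ∀ a b, μ {a} * μ {b} ≤ μ {a ⊓ b} * μ {a ⊔ b}) (s t : Set α) :
    μ s * μ t ≤ μ (s ⊼ t) * μ (s ⊻ t) := by
  classical
  -- `four_functions_theorem` needs a strict ordered semiring, which `ℝ≥0∞` is not.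
  let m : α → ℝ≥0 := fun a => (μ {a}).toNNReal
  have hm (S : Finset α) : ((∑ a ∈ S, m a : ℝ≥0) : ℝ≥0∞) = μ S := by simp [m]
  have hm_mul (a b : α) : m a * m b ≤ m (a ⊓ b) * m (a ⊔ b) := by
    simpa [m] using ENNReal.toNNReal_mono (by finiteness) (hμ a b)
  have key := four_functions_theorem m m m m (fun _ => zero_le) (fun _ => zero_le)
    (fun _ => zero_le) (fun _ => zero_le) hm_mul s.toFinset t.toFinset
  simpa only [ENNReal.coe_mul, hm, Finset.coe_infs, Finset.coe_sups, Set.coe_toFinset] using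
    ENNReal.coe_le_coe.2 key

variable [IsProbabilityMeasure μ] (hμ : ∀ a b, μ {a} * μ {b} ≤ μ {a ⊓ b} * μ {a ⊔ b})
include hμ

theorem IsUpperSet.measure_mul_measure_le {s t : Set α} (hs : IsUpperSet s)
    (ht : IsUpperSet t) : μ s * μ t ≤ μ (s ∩ t) :=
  calc μ s * μ t ≤ μ (s ⊼ t) * μ (s ⊻ t) := measure_mul_measure_le_infs_mul_sups hμ s t
    _ ≤ 1 * μ (s ∩ t) := by
      gcongr
      · exact prob_le_one
      · exact Set.sups_subset_iff.2 fun a ha b hb => ⟨hs le_sup_left ha, ht le_sup_right hb⟩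
    _ = μ (s ∩ t) := one_mul _

theorem IsLowerSet.measure_mul_measure_le {s t : Set α} (hs : IsLowerSet s)
    (ht : IsLowerSet t) : μ s * μ t ≤ μ (s ∩ t) :=
  calc μ s * μ t ≤ μ (s ⊼ t) * μ (s ⊻ t) := measure_mul_measure_le_infs_mul_sups hμ s t
    _ ≤ μ (s ∩ t) * 1 := by
      gcongr
      · exact Set.infs_subset_iff.2 fun a ha b hb => ⟨hs inf_le_left ha, ht inf_le_right hb⟩
      · exact prob_le_one
    _ = μ (s ∩ t) := mul_one _

theorem IsLowerSet.prod_measure_le_measure_biInter {ι : Type*} (s : Finset ι) {t : ι → Set α}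
    (ht : ∀ i, IsLowerSet (t i)) : ∏ i ∈ s, μ (t i) ≤ μ (⋂ i ∈ s, t i) := by
  classical
  induction s using Finset.induction_on with
  | empty => simp
  | insert i s hi ih =>
    rw [Finset.prod_insert hi, Finset.set_biInter_insert]
    calc μ (t i) * ∏ j ∈ s, μ (t j) ≤ μ (t i) * μ (⋂ j ∈ s, t j) := by gcongr
      _ ≤ μ (t i ∩ ⋂ j ∈ s, t j) :=
        (ht i).measure_mul_measure_le hμ (isLowerSet_iInter₂ fun j _ => ht j)

end Harris

section Percolation

variable {d : ℕ} {W : Fin d → Fin d → ℝ}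

lemma isProbabilityMeasure_bernoulliMeasure {p : ℝ} (hp : p ∈ Set.Icc (0 : ℝ) 1) :
    IsProbabilityMeasure (bernoulliMeasure p) :=
  ⟨by simp [bernoulliMeasure, ← ENNReal.ofReal_add hp.1 (sub_nonneg.2 hp.2)]⟩

lemma isProbabilityMeasure_bernMeasure (hW : ∀ u v, W u v ∈ Set.Icc (0 : ℝ) 1) :
    IsProbabilityMeasure (bernMeasure W) := by
  have := fun u v => isProbabilityMeasure_bernoulliMeasure (hW u v)
  rw [bernMeasure]
  infer_instance

lemma bernMeasure_setOf_apply_mem (hW : ∀ u v, W u v ∈ Set.Icc (0 : ℝ) 1) (u v : Fin d)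
    (S : Set Bool) : bernMeasure W {A | A u v ∈ S} = bernoulliMeasure (W u v) S := by
  have := fun u v => isProbabilityMeasure_bernoulliMeasure (hW u v)
  exact ((measurePreserving_eval (fun v => bernoulliMeasure (W u v)) v).comp
    (measurePreserving_eval (fun u => Measure.pi fun v => bernoulliMeasure (W u v)) u)
    ).measure_preimage MeasurableSet.of_discrete.nullMeasurableSet

lemma bernMeasure_singleton_mul_singleton_le (A B : Fin d → Fin d → Bool) :
    bernMeasure W {A} * bernMeasure W {B} ≤ bernMeasure W {A ⊓ B} * bernMeasure W {A ⊔ B} :=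
  Measure.pi_singleton_mul_singleton_le_inf_sup _ (fun _ =>
    Measure.pi_singleton_mul_singleton_le_inf_sup _ (fun _ a b =>
      (measure_singleton_mul_singleton_eq_inf_sup _ a b).le)) A B

def reachEvent (l : ℕ) (x y : Fin d) : Set (Fin d → Fin d → Bool) := {A | ReachF A l x y = true}

def edgeEvent (u v : Fin d) : Set (Fin d → Fin d → Bool) := {A | A u v = true}

lemma bernMeasure_edgeEvent (hW : ∀ u v, W u v ∈ Set.Icc (0 : ℝ) 1) (u v : Fin d) :
    bernMeasure W (edgeEvent u v) = ENNReal.ofReal (W u v) :=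
  (bernMeasure_setOf_apply_mem hW u v {true}).trans (by simp [bernoulliMeasure])

lemma bernMeasure_edgeEvent_compl (hW : ∀ u v, W u v ∈ Set.Icc (0 : ℝ) 1) (u v : Fin d) :
    bernMeasure W (edgeEvent u v)ᶜ = ENNReal.ofReal (1 - W u v) := by
  have hcompl : (edgeEvent u v)ᶜ = {A | A u v ∈ ({false} : Set Bool)} := by ext; simp [edgeEvent]
  rw [hcompl, bernMeasure_setOf_apply_mem hW u v]
  simp [bernoulliMeasure]

lemma isUpperSet_edgeEvent (u v : Fin d) : IsUpperSet (edgeEvent u v) :=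
  fun _ _ hAB hA => Bool.le_iff_imp.1 (hAB u v) hA

lemma isUpperSet_reachEvent (l : ℕ) (x y : Fin d) : IsUpperSet (reachEvent l x y) := by
  intro A B hAB
  induction l generalizing y with
  | zero => exact id
  | succ l ih =>
    simp only [reachEvent, Set.mem_ofPred_eq, ReachF, Bool.or_eq_true, decide_eq_true_eq]
    rintro (⟨u, hu, huy⟩ | h)
    · exact Or.inl ⟨u, ih u hu, isUpperSet_edgeEvent u y hAB huy⟩
    · exact Or.inr (ih y h)

lemma reachEvent_subset_succ (l : ℕ) (x y : Fin d) :
    reachEvent l x y ⊆ reachEvent (l + 1) x y :=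
  fun _ h => by simp_all [reachEvent, ReachF]

lemma reachEvent_inter_edgeEvent_subset_succ (l : ℕ) (x u y : Fin d) :
    reachEvent l x u ∩ edgeEvent u y ⊆ reachEvent (l + 1) x y :=
  fun _ h => by simp only [reachEvent, edgeEvent, ReachF, Set.mem_inter_iff, Set.mem_ofPred_eq,
    Bool.or_eq_true, decide_eq_true_eq] at h ⊢; exact Or.inl ⟨u, h⟩

lemma reachEvent_succ_compl (l : ℕ) (x y : Fin d) :
    (reachEvent (l + 1) x y)ᶜ =
      (⋂ u ∈ Finset.univ, (reachEvent l x u ∩ edgeEvent u y)ᶜ) ∩ (reachEvent l x y)ᶜ := by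
  ext A
  simp [reachEvent, edgeEvent, ReachF]

end Percolation

section Main

variable {d : ℕ} {W : Fin d → Fin d → ℝ} (hW : ∀ u v, W u v ∈ Set.Icc (0 : ℝ) 1)
  {α : ℝ} (hα : 0 < α)
include hW hα

lemma softReach_succ_le {l : ℕ} {x y : Fin d}
    (ih : ∀ z, softReach α W l x z ≤ elog (bernMeasure W (reachEvent l x z))) :
    softReach α W (l + 1) x y ≤ elog (bernMeasure W (reachEvent (l + 1) x y)) := by
  have := isProbabilityMeasure_bernMeasure hW
  refine softOr_le hα fun i => ?_
  induction i using Fin.cases with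
  | zero => exact (ih y).trans (elog_mono (measure_mono (reachEvent_subset_succ l x y)))
  | succ u =>
    calc softReach α W l x u + elog (ENNReal.ofReal (W u y))
        ≤ elog (bernMeasure W (reachEvent l x u)) + elog (bernMeasure W (edgeEvent u y)) := by
          rw [bernMeasure_edgeEvent hW]
          exact add_le_add_left (ih u) _
      _ ≤ elog (bernMeasure W (reachEvent (l + 1) x y)) := by
        rw [← elog_mul]
        refine elog_mono ((IsUpperSet.measure_mul_measure_le bernMeasure_singleton_mul_singleton_le
          (isUpperSet_reachEvent l x u) (isUpperSet_edgeEvent u y)).trans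
          (measure_mono (reachEvent_inter_edgeEvent_subset_succ l x u y)))

lemma softUnreach_succ_le {l : ℕ} {x y : Fin d}
    (ih : ∀ z, softUnreach α W l x z ≤ elog (bernMeasure W (reachEvent l x z)ᶜ)) :
    softUnreach α W (l + 1) x y ≤ elog (bernMeasure W (reachEvent (l + 1) x y)ᶜ) := by
  have := isProbabilityMeasure_bernMeasure hW
  set C : Fin d → Set (Fin d → Fin d → Bool) := fun u => (reachEvent l x u ∩ edgeEvent u y)ᶜ
  have hC (u : Fin d) :
      softOr α ![softUnreach α W l x u, elog (ENNReal.ofReal (1 - W u y))]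
        ≤ elog (bernMeasure W (C u)) := by
    refine softOr_le hα (Fin.forall_fin_two.2 ⟨?_, ?_⟩)
    · exact (ih u).trans (elog_mono (measure_mono (Set.compl_subset_compl.2
        Set.inter_subset_left)))
    · rw [Matrix.cons_val_one, Matrix.cons_val_fin_one, ← bernMeasure_edgeEvent_compl hW]
      exact elog_mono (measure_mono (Set.compl_subset_compl.2 Set.inter_subset_right))
  have hC_lower (u : Fin d) : IsLowerSet (C u) :=
    ((isUpperSet_reachEvent l x u).inter (isUpperSet_edgeEvent u y)).compl
  calc softUnreach α W (l + 1) x y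
      ≤ (∑ u, elog (bernMeasure W (C u))) + elog (bernMeasure W (reachEvent l x y)ᶜ) :=
        add_le_add (Finset.sum_le_sum fun u _ => hC u) (ih y)
    _ = elog ((∏ u, bernMeasure W (C u)) * bernMeasure W (reachEvent l x y)ᶜ) := by
        rw [elog_mul, elog_prod]
    _ ≤ elog (bernMeasure W ((⋂ u ∈ Finset.univ, C u) ∩ (reachEvent l x y)ᶜ)) := by
        refine elog_mono ((mul_le_mul_left
          (IsLowerSet.prod_measure_le_measure_biInter bernMeasure_singleton_mul_singleton_le
            _ hC_lower) _).trans ?_)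
        exact IsLowerSet.measure_mul_measure_le bernMeasure_singleton_mul_singleton_le
          (isLowerSet_iInter₂ fun u _ => hC_lower u) (isUpperSet_reachEvent l x y).compl
    _ = elog (bernMeasure W (reachEvent (l + 1) x y)ᶜ) := by rw [reachEvent_succ_compl]

lemma softReach_le_elog_bernMeasure (l : ℕ) (x y : Fin d) :
    softReach α W l x y ≤ elog (bernMeasure W (reachEvent l x y)) ∧
      softUnreach α W l x y ≤ elog (bernMeasure W (reachEvent l x y)ᶜ) := by
  have := isProbabilityMeasure_bernMeasure hW
  induction l generalizing y with
  | zero =>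
    by_cases hxy : x = y <;> simp [softReach, softUnreach, reachEvent, ReachF, hxy, elog_eq_log]
  | succ l ih =>
    exact ⟨softReach_succ_le hW hα fun z => (ih z).1, softUnreach_succ_le hW hα fun z => (ih z).2⟩

end Main

theorem softReach_le_log_expectation_general {d : ℕ} (W : Fin d → Fin d → ℝ)
    (hW : ∀ u v, W u v ∈ Set.Icc (0 : ℝ) 1) (α : ℝ) (hα : α ∈ Set.Ioc (0 : ℝ) 1)
    (l : ℕ) (x y : Fin d) :
    softReach α W l x y ≤
      elog (∫⁻ A, (if ReachF A l x y = true then 1 else 0) ∂ bernMeasure W) ∧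
    softUnreach α W l x y ≤
      elog (∫⁻ A, (if ReachF A l x y = true then 0 else 1) ∂ bernMeasure W) := by
  have hreach : ∫⁻ A, (if ReachF A l x y = true then 1 else 0) ∂ bernMeasure W
      = bernMeasure W (reachEvent l x y) := by
    rw [← lintegral_indicator_one MeasurableSet.of_discrete]
    congr with A
    by_cases h : ReachF A l x y = true <;> simp [reachEvent, h]
  have hunreach : ∫⁻ A, (if ReachF A l x y = true then 0 else 1) ∂ bernMeasure W
      = bernMeasure W (reachEvent l x y)ᶜ := by
    rw [← lintegral_indicator_one MeasurableSet.of_discrete]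
    congr with A
    by_cases h : ReachF A l x y = true <;> simp [reachEvent, h]
  rw [hreach, hunreach]
  exact softReach_le_elog_bernMeasure hW hα.1 l x y

/-- Lemma 3.6 (Reachability Percolation Lower Bound): the soft reachability and soft
unreachability scores lower-bound the logarithms of the expected reachability and
unreachability indicators under `Bern(W)`. -/
theorem softReach_le_log_expectation {d : ℕ} (W : Fin d → Fin d → ℝ)
    (hW : ∀ u v, W u v ∈ Set.Icc (0 : ℝ) 1) (α : ℝ) (hα : α ∈ Set.Ioc (0 : ℝ) 1)
    (l : ℕ) (hl : l < d) (x y : Fin d) :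
    softReach α W l x y ≤
      elog (∫⁻ A, (if ReachF A l x y = true then 1 else 0) ∂ bernMeasure W) ∧
    softUnreach α W l x y ≤
      elog (∫⁻ A, (if ReachF A l x y = true then 0 else 1) ∂ bernMeasure W) :=
  softReach_le_log_expectation_general W hW α hα l x y

end
end

section
/- For every m ≥ 1 and every x : Fin m → ℝ, the function α ↦ α · log((1/m) · Σ_i exp(x_i / α)) tends to max_i x_i as α → 0 from the right (i.e., along the filter of positive reals approaching 0). -/
/-!
With `M = max_i x_i`, the largest term gives `exp (M/α) ≤ ∑ i, exp (x i/α) ≤ n · exp (M/α)`,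
so `α log ∑ i, exp (x i/α)` is squeezed between `M` and `M + α log n`. Averaging instead of
summing only adds `α log (1/m)`, which also vanishes as `α → 0⁺`.
-/

open Filter Topology Real Finset

lemma tendsto_mul_const_nhdsGT_zero (c : ℝ) : Tendsto (fun α : ℝ => α * c) (𝓝[>] 0) (𝓝 0) :=
  ((continuous_id.mul continuous_const).tendsto' 0 0 (zero_mul c)).mono_left nhdsWithin_le_nhds

section LogSumExp

variable {ι : Type*} {s : Finset ι} (hs : s.Nonempty) (x : ι → ℝ) {α : ℝ}

lemma exp_sup'_div_le_sum_exp_div : exp (s.sup' hs x / α) ≤ ∑ i ∈ s, exp (x i / α) := by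
  obtain ⟨i, hi, hmax⟩ := s.exists_mem_eq_sup' hs x
  rw [hmax]
  exact single_le_sum (f := fun j => exp (x j / α)) (fun j _ => (exp_pos _).le) hi

lemma sum_exp_div_le_card_mul_exp_sup'_div (hα : 0 < α) :
    ∑ i ∈ s, exp (x i / α) ≤ #s * exp (s.sup' hs x / α) := by
  simpa using sum_le_card_nsmul s _ _ fun i hi =>
    exp_le_exp.mpr (div_le_div_of_nonneg_right (s.le_sup' x hi) hα.le)

lemma sup'_le_mul_log_sum_exp_div (hα : 0 < α) :
    s.sup' hs x ≤ α * log (∑ i ∈ s, exp (x i / α)) := by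
  have hsum : 0 < ∑ i ∈ s, exp (x i / α) := sum_pos (fun i _ => exp_pos _) hs
  have := (le_log_iff_exp_le hsum).mpr (exp_sup'_div_le_sum_exp_div hs x)
  rwa [div_le_iff₀' hα] at this

lemma mul_log_sum_exp_div_le (hα : 0 < α) :
    α * log (∑ i ∈ s, exp (x i / α)) ≤ s.sup' hs x + α * log #s := by
  have hcard : (0 : ℝ) < #s := by exact_mod_cast hs.card_pos
  have := log_le_log (sum_pos (fun i _ => exp_pos _) hs)
    (sum_exp_div_le_card_mul_exp_sup'_div hs x hα)
  rw [log_mul hcard.ne' (exp_pos _).ne', log_exp] at this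
  calc α * log (∑ i ∈ s, exp (x i / α)) ≤ α * (log #s + s.sup' hs x / α) :=
        mul_le_mul_of_nonneg_left this hα.le
    _ = s.sup' hs x + α * log #s := by field_simp; ring

theorem tendsto_mul_log_sum_exp_div :
    Tendsto (fun α => α * log (∑ i ∈ s, exp (x i / α))) (𝓝[>] 0) (𝓝 (s.sup' hs x)) := by
  have hupper : Tendsto (fun α : ℝ => s.sup' hs x + α * log #s) (𝓝[>] 0) (𝓝 (s.sup' hs x)) := by
    simpa using tendsto_const_nhds.add (tendsto_mul_const_nhdsGT_zero (log #s))
  refine tendsto_of_tendsto_of_tendsto_of_le_of_le' tendsto_const_nhds hupper ?_ ?_ <;>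
    filter_upwards [self_mem_nhdsWithin] with α hα
  exacts [sup'_le_mul_log_sum_exp_div hs x hα, mul_log_sum_exp_div_le hs x hα]

end LogSumExp

/-- As `α → 0⁺`, the LogMeanExp soft disjunction `α log((1/m) Σ_i exp(x_i/α))`
tends to `max_i x_i`. -/
theorem logMeanExp_tendsto_max (m : ℕ) (hm : 0 < m) (x : Fin m → ℝ) :
    Filter.Tendsto
      (fun α : ℝ => α * Real.log ((1 / (m : ℝ)) * ∑ i, Real.exp (x i / α)))
      (nhdsWithin 0 (Set.Ioi 0))
      (nhds (Finset.univ.sup' (Finset.univ_nonempty_iff.mpr ⟨⟨0, hm⟩⟩) x)) := by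
  have hne : (univ : Finset (Fin m)).Nonempty := univ_nonempty_iff.mpr ⟨⟨0, hm⟩⟩
  have hsplit : ∀ α : ℝ, α * log (1 / (m : ℝ) * ∑ i, exp (x i / α)) =
      α * log (1 / m) + α * log (∑ i, exp (x i / α)) := fun α => by
    rw [log_mul (by positivity) (sum_pos (fun i _ => exp_pos _) hne).ne', mul_add]
  simpa only [hsplit, zero_add] using
    (tendsto_mul_const_nhdsGT_zero (log (1 / m))).add (tendsto_mul_log_sum_exp_div hne x)
end

section
/- Fix a linearly ordered finite ground set V = Fin d and let ℐ = ℐ₀ ∪ ℐ₁, where ℐ₀ = {({x},{y},∅) : x, y ∈ V, x > y} and ℐ₁ = {({x},{y},{z}) : x, y, z ∈ V, x > y, z ∉ {x,y}}. Then there is no instance of any of the five graphoid inference rules (symmetry, decomposition, weak union, contraction, intersection, with the nonemptiness and disjointness conditions stated in the definitions) whose conclusion belongs to ℐ and all of whose premises belong to ℐ. Consequently, no CI statement in ℐ can be obtained in a single graphoid inference step from other CI statements in ℐ. (Lemma 4.3.) -/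
/- Every triple in `ℐ` has singleton first and second components `{x}`, `{y}` with `y < x`.
Symmetry would need both `y < x` and `x < y`. Decomposition and weak union have a premise,
and contraction and intersection a conclusion, whose second component is a union of two
disjoint nonempty sets, which has at least two elements and so is no singleton. -/

/-- A CI triple over the ground set `Fin d`: an ordered triple `(X, Y, Z)` of finite
subsets. (Validity — `X`, `Y` nonempty and `X`, `Y`, `Z` pairwise disjoint — is
enforced in the side conditions of the inference rules.) -/
abbrev CITriple (d : ℕ) := Finset (Fin d) × Finset (Fin d) × Finset (Fin d)

/-- One inference step of the five graphoid rules: `GraphoidStep premises conclusion`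
holds iff the rule instance derives `conclusion` from the list `premises`, with the
required nonemptiness and pairwise-disjointness side conditions. -/
inductive GraphoidStep (d : ℕ) : List (CITriple d) → CITriple d → Prop
  | symmetry (X Y Z : Finset (Fin d)) (hX : X.Nonempty) (hY : Y.Nonempty)
      (hXY : Disjoint X Y) (hXZ : Disjoint X Z) (hYZ : Disjoint Y Z) :
      GraphoidStep d [(X, Y, Z)] (Y, X, Z)
  | decomposition (X Y W Z : Finset (Fin d)) (hX : X.Nonempty) (hY : Y.Nonempty)
      (hW : W.Nonempty) (hXY : Disjoint X Y) (hXW : Disjoint X W) (hXZ : Disjoint X Z)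
      (hYW : Disjoint Y W) (hYZ : Disjoint Y Z) (hWZ : Disjoint W Z) :
      GraphoidStep d [(X, Y ∪ W, Z)] (X, Y, Z)
  | weakUnion (X Y W Z : Finset (Fin d)) (hX : X.Nonempty) (hY : Y.Nonempty)
      (hW : W.Nonempty) (hXY : Disjoint X Y) (hXW : Disjoint X W) (hXZ : Disjoint X Z)
      (hYW : Disjoint Y W) (hYZ : Disjoint Y Z) (hWZ : Disjoint W Z) :
      GraphoidStep d [(X, Y ∪ W, Z)] (X, Y, Z ∪ W)
  | contraction (X Y W Z : Finset (Fin d)) (hX : X.Nonempty) (hY : Y.Nonempty)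
      (hW : W.Nonempty) (hXY : Disjoint X Y) (hXW : Disjoint X W) (hXZ : Disjoint X Z)
      (hYW : Disjoint Y W) (hYZ : Disjoint Y Z) (hWZ : Disjoint W Z) :
      GraphoidStep d [(X, Y, Z), (X, W, Z ∪ Y)] (X, Y ∪ W, Z)
  | intersection (X Y W Z : Finset (Fin d)) (hX : X.Nonempty) (hY : Y.Nonempty)
      (hW : W.Nonempty) (hXY : Disjoint X Y) (hXW : Disjoint X W) (hXZ : Disjoint X Z)
      (hYW : Disjoint Y W) (hYZ : Disjoint Y Z) (hWZ : Disjoint W Z) :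
      GraphoidStep d [(X, Y, Z ∪ W), (X, W, Z ∪ Y)] (X, Y ∪ W, Z)

/-- The family `ℐ = ℐ₀ ∪ ℐ₁` of low-order CI statements: `ℐ₀` are the triples
`({x}, {y}, ∅)` with `x > y`, and `ℐ₁` are the triples `({x}, {y}, {z})` with
`x > y` and `z ∉ {x, y}`. -/
def lowOrderCI (d : ℕ) : Set (CITriple d) :=
  {t | ∃ x y : Fin d, y < x ∧ t = ({x}, {y}, (∅ : Finset (Fin d)))} ∪
  {t | ∃ x y z : Fin d, y < x ∧ z ≠ x ∧ z ≠ y ∧ t = ({x}, {y}, ({z} : Finset (Fin d)))}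

theorem Finset.union_ne_singleton_of_disjoint {α : Type*} [DecidableEq α] {s t : Finset α}
    (hs : s.Nonempty) (ht : t.Nonempty) (hst : Disjoint s t) (a : α) : s ∪ t ≠ {a} := by
  intro h
  have hcard := congrArg Finset.card h
  rw [Finset.card_union_of_disjoint hst, Finset.card_singleton] at hcard
  have := hs.card_pos
  have := ht.card_pos
  omega

theorem exists_singletons_of_mem_lowOrderCI {d : ℕ} {t : CITriple d} (ht : t ∈ lowOrderCI d) :
    ∃ x y : Fin d, y < x ∧ t.1 = {x} ∧ t.2.1 = {y} := by
  rcases ht with ⟨x, y, hyx, rfl⟩ | ⟨x, y, z, hyx, -, -, rfl⟩ <;> exact ⟨x, y, hyx, rfl, rfl⟩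

/-- Lemma 4.3 (Mutual Independence of Low-order CI Statements): there is no instance
of any of the five graphoid inference rules whose conclusion belongs to `ℐ` and all
of whose premises belong to `ℐ`; hence no CI statement in `ℐ` can be obtained in a
single graphoid inference step from other CI statements in `ℐ`. -/
theorem no_graphoid_step_within_lowOrderCI (d : ℕ)
    (premises : List (CITriple d)) (conclusion : CITriple d)
    (hstep : GraphoidStep d premises conclusion)
    (hconcl : conclusion ∈ lowOrderCI d)
    (hprem : ∀ p ∈ premises, p ∈ lowOrderCI d) : False := by
  cases hstep with
  | symmetry X Y Z =>
    obtain ⟨x, y, hyx, hX, hY⟩ :=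
      exists_singletons_of_mem_lowOrderCI (hprem _ List.mem_cons_self)
    obtain ⟨x', y', hyx', hY', hX'⟩ := exists_singletons_of_mem_lowOrderCI hconcl
    obtain rfl : x = y' := Finset.singleton_inj.mp (hX.symm.trans hX')
    obtain rfl : y = x' := Finset.singleton_inj.mp (hY.symm.trans hY')
    exact lt_asymm hyx hyx'
  | decomposition X Y W Z _ hY hW _ _ _ hYW =>
    obtain ⟨-, a, -, -, ha⟩ :=
      exists_singletons_of_mem_lowOrderCI (hprem _ List.mem_cons_self)
    exact Finset.union_ne_singleton_of_disjoint hY hW hYW a ha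
  | weakUnion X Y W Z _ hY hW _ _ _ hYW =>
    obtain ⟨-, a, -, -, ha⟩ :=
      exists_singletons_of_mem_lowOrderCI (hprem _ List.mem_cons_self)
    exact Finset.union_ne_singleton_of_disjoint hY hW hYW a ha
  | contraction X Y W Z _ hY hW _ _ _ hYW =>
    obtain ⟨-, a, -, -, ha⟩ := exists_singletons_of_mem_lowOrderCI hconcl
    exact Finset.union_ne_singleton_of_disjoint hY hW hYW a ha
  | intersection X Y W Z _ hY hW _ _ _ hYW =>
    obtain ⟨-, a, -, -, ha⟩ := exists_singletons_of_mem_lowOrderCI hconcl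
    exact Finset.union_ne_singleton_of_disjoint hY hW hYW a ha
end
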